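/- Let X be a set, Y a finite set, ℋ ⊆ Y^X, and μ a probability measure on X. Suppose ℋ has an ε-cover of size m with respect to the pseudometric d(F,H) = μ({x : F(x) ≠ H(x)}), where ε < 1/2: i.e., there is ℋ' ⊆ ℋ with |ℋ'| ≤ m such that every F ∈ ℋ is within distance ε of some H ∈ ℋ'. If V ⊆ X is a finite set Natarajan-shattered by ℋ and μ is the uniform measure on V, then |V| ≤ log₂ m / (1 − h₂(ε)). -/

import Mathlib

/-!
For `U ⊆ V` let `g_U ∈ ℋ` realise the pattern `f₁` on `U`, `f₀` on `V \ U`. Each `g_U` lies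
within Hamming distance `ε |V|` of some `H ∈ ℋ'`, and the `U` served by one `H` differ from
the pattern of `H` in at most `ε |V|` points, so there are at most `2 ^ (|V| h₂(ε))` of them.
Hence `2 ^ |V| ≤ m 2 ^ (|V| h₂(ε))`; take `log₂`.
-/

/-- Binary entropy function. -/
noncomputable def binEnt (t : ℝ) : ℝ :=
  t * Real.logb 2 (1 / t) + (1 - t) * Real.logb 2 (1 / (1 - t))

/-- `ℱ` Natarajan-shatters the finite set `A`. -/
def NatShatters {X Y : Type*} [DecidableEq X] (ℱ : Set (X → Y)) (A : Finset X) : Prop :=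
  ∃ f₀ f₁ : X → Y, (∀ a ∈ A, f₀ a ≠ f₁ a) ∧
    ∀ U ⊆ A, ∃ g ∈ ℱ, ∀ a ∈ A, g a = if a ∈ U then f₁ a else f₀ a

open Finset Real

lemma binEnt_eq_binEntropy_div_log_two (t : ℝ) : binEnt t = binEntropy t / log 2 := by
  simp only [binEnt, binEntropy, logb, one_div, log_inv, add_div]
  ring

lemma binEnt_lt_one {ε : ℝ} (h : ε ≠ 1 / 2) : binEnt ε < 1 := by
  rw [binEnt_eq_binEntropy_div_log_two, div_lt_one (log_pos one_lt_two)]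
  exact binEntropy_lt_log_two.2 (by simpa using h)

lemma two_rpow_neg_mul_binEnt {ε : ℝ} (hε0 : 0 < ε) (hε1 : ε < 1) (x : ℝ) :
    (2 : ℝ) ^ (-(x * binEnt ε)) = (1 - ε) ^ x * (ε / (1 - ε)) ^ (ε * x) := by
  have h1ε : 0 < 1 - ε := by linarith
  rw [rpow_def_of_pos two_pos, rpow_def_of_pos h1ε, rpow_def_of_pos (div_pos hε0 h1ε),
    ← exp_add, binEnt_eq_binEntropy_div_log_two, binEntropy, log_div hε0.ne' h1ε.ne',
    log_inv, log_inv]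
  congr 1
  field_simp
  ring

lemma two_rpow_neg_mul_binEnt_le_pow_mul_pow {ε : ℝ} (hε0 : 0 < ε) (hε : ε ≤ 1 / 2)
    {n k : ℕ} (hkn : k ≤ n) (hk : (k : ℝ) ≤ ε * n) :
    (2 : ℝ) ^ (-(n * binEnt ε)) ≤ ε ^ k * (1 - ε) ^ (n - k) := by
  have h1ε : 0 < 1 - ε := by linarith
  have hratio : ε / (1 - ε) ≤ 1 := (div_le_one h1ε).2 (by linarith)
  have hsplit :
      ε ^ k * (1 - ε) ^ (n - k) = (1 - ε) ^ (n : ℝ) * (ε / (1 - ε)) ^ (k : ℝ) := by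
    rw [rpow_natCast, rpow_natCast, div_pow, ← Nat.sub_add_cancel hkn, pow_add,
      Nat.add_sub_cancel]
    field_simp
  rw [two_rpow_neg_mul_binEnt hε0 (by linarith), hsplit]
  exact mul_le_mul_of_nonneg_left (rpow_le_rpow_of_exponent_ge (div_pos hε0 h1ε) hratio hk)
    (by positivity)

/-- The volume bound for Hamming balls: weigh each `S ⊆ V` by `ε ^ #S (1 - ε) ^ (#V - #S)`;
the weights sum to `1`, and each small `S` weighs at least `2 ^ (-#V h₂(ε))`. -/
lemma card_filter_card_le_le_two_rpow {α : Type*} {ε : ℝ} (hε0 : 0 < ε) (hε : ε ≤ 1 / 2)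
    (V : Finset α) :
    (#{S ∈ V.powerset | (#S : ℝ) ≤ ε * #V} : ℝ) ≤ 2 ^ ((#V : ℝ) * binEnt ε) := by
  set B := {S ∈ V.powerset | (#S : ℝ) ≤ ε * #V}
  have hweights : #B * (2 : ℝ) ^ (-(#V * binEnt ε)) ≤ 1 :=
    calc #B * (2 : ℝ) ^ (-(#V * binEnt ε))
        = ∑ _S ∈ B, (2 : ℝ) ^ (-(#V * binEnt ε)) := by rw [sum_const, nsmul_eq_mul]
      _ ≤ ∑ S ∈ B, ε ^ #S * (1 - ε) ^ (#V - #S) := by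
        refine sum_le_sum fun S hS => ?_
        rw [mem_filter, mem_powerset] at hS
        exact two_rpow_neg_mul_binEnt_le_pow_mul_pow hε0 hε (card_le_card hS.1) hS.2
      _ ≤ ∑ S ∈ V.powerset, ε ^ #S * (1 - ε) ^ (#V - #S) :=
        sum_le_sum_of_subset_of_nonneg (filter_subset _ _) fun S _ _ => by
          have : 0 < 1 - ε := by linarith
          positivity
      _ = 1 := by rw [sum_pow_mul_eq_add_pow, add_sub_cancel, one_pow]
  rwa [rpow_neg zero_le_two, ← div_eq_mul_inv, div_le_one (by positivity)] at hweights

section Natarajan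

variable {X Y : Type*} [DecidableEq X] [DecidableEq Y] {V : Finset X} {f₀ f₁ : X → Y}

lemma symmDiff_subset_filter_piecewise_ne (hne : ∀ a ∈ V, f₀ a ≠ f₁ a) {U : Finset X}
    (hU : U ⊆ V) (H : X → Y) :
    symmDiff U {v ∈ V | H v = f₁ v} ⊆ {v ∈ V | U.piecewise f₁ f₀ v ≠ H v} := by
  intro v hv
  rw [mem_symmDiff, mem_filter] at hv
  rcases hv with ⟨hvU, hHv⟩ | ⟨⟨hvV, hHv⟩, hvU⟩
  · have hvV := hU hvU
    refine mem_filter.2 ⟨hvV, ?_⟩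
    rw [piecewise_eq_of_mem _ _ _ hvU]
    exact fun h => hHv ⟨hvV, h.symm⟩
  · exact mem_filter.2 ⟨hvV, by rw [piecewise_eq_of_notMem _ _ _ hvU, hHv]; exact hne v hvV⟩

/-- Translating by the pattern `{v | H v = f₁ v}` of `H` injects the patterns within distance `t`
of `H` into the Hamming ball of radius `t` about `∅`. -/
lemma card_filter_piecewise_near_le (hne : ∀ a ∈ V, f₀ a ≠ f₁ a) (H : X → Y) (t : ℝ) :
    #{U ∈ V.powerset | (#{v ∈ V | U.piecewise f₁ f₀ v ≠ H v} : ℝ) ≤ t} ≤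
      #{S ∈ V.powerset | (#S : ℝ) ≤ t} := by
  refine card_le_card_of_injOn (fun U => symmDiff U {v ∈ V | H v = f₁ v}) (fun U hU => ?_)
    ((symmDiff_left_injective _).injOn)
  rw [coe_filter, Set.mem_ofPred_eq, mem_powerset] at hU
  have hsub := symmDiff_subset_filter_piecewise_ne hne hU.1 H
  rw [coe_filter, Set.mem_ofPred_eq, mem_powerset]
  exact ⟨hsub.trans (filter_subset _ _),
    le_trans (by exact_mod_cast card_le_card hsub) hU.2⟩

end Natarajan

lemma le_logb_div_of_two_rpow_le {n h m : ℝ} (hh : h < 1)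
    (hnm : (2 : ℝ) ^ n ≤ m * 2 ^ (n * h)) : n ≤ logb 2 m / (1 - h) := by
  have hm : 0 < m :=
    pos_of_mul_pos_left ((rpow_pos_of_pos two_pos n).trans_le hnm) (by positivity)
  rw [le_div_iff₀ (by linarith), le_logb_iff_rpow_le one_lt_two hm, mul_one_sub,
    rpow_sub two_pos, div_le_iff₀ (by positivity)]
  exact hnm

theorem stmt8_general {X Y : Type*} [DecidableEq X] [DecidableEq Y]
    (ℋ : Set (X → Y)) (V : Finset X)
    (hshatter : NatShatters ℋ V)
    (ε : ℝ) (hε0 : 0 < ε) (hε : ε < 1 / 2) (m : ℕ)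
    (ℋ' : Finset (X → Y)) (hcard : ℋ'.card ≤ m)
    (hcover : ∀ F ∈ ℋ, ∃ H ∈ ℋ',
      ((V.filter (fun v => F v ≠ H v)).card : ℝ) / V.card ≤ ε) :
    (V.card : ℝ) ≤ Real.logb 2 m / (1 - binEnt ε) := by
  obtain ⟨f₀, f₁, hne, hmix⟩ := hshatter
  set ball := fun H : X → Y =>
    {U ∈ V.powerset | (#{v ∈ V | U.piecewise f₁ f₀ v ≠ H v} : ℝ) ≤ ε * #V}
  have hcovered : V.powerset ⊆ ℋ'.biUnion ball := by
    intro U hU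
    obtain ⟨g, hgℋ, hg⟩ := hmix U (mem_powerset.1 hU)
    obtain ⟨H, hHℋ', hgH⟩ := hcover g hgℋ
    have hfilter : {v ∈ V | g v ≠ H v} = {v ∈ V | U.piecewise f₁ f₀ v ≠ H v} :=
      filter_congr fun v hv => by rw [hg v hv, piecewise]
    refine mem_biUnion.2 ⟨H, hHℋ', mem_filter.2 ⟨hU, ?_⟩⟩
    rcases V.eq_empty_or_nonempty with rfl | hV
    · simp
    · rw [hfilter, div_le_iff₀ (by exact_mod_cast hV.card_pos)] at hgH
      linarith
  have hcount : 2 ^ #V ≤ m * #{S ∈ V.powerset | (#S : ℝ) ≤ ε * #V} := by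
    rw [← card_powerset]
    refine (card_le_card hcovered).trans ((card_biUnion_le_card_mul _ _ _
      fun H _ => card_filter_piecewise_near_le hne H _).trans ?_)
    exact Nat.mul_le_mul_right _ hcard
  refine le_logb_div_of_two_rpow_le (binEnt_lt_one hε.ne) ?_
  calc (2 : ℝ) ^ (#V : ℝ) ≤ m * #{S ∈ V.powerset | (#S : ℝ) ≤ ε * #V} := by
        rw [rpow_natCast]; exact_mod_cast hcount
    _ ≤ m * 2 ^ ((#V : ℝ) * binEnt ε) := by
        gcongr; exact card_filter_card_le_le_two_rpow hε0 hε.le V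

theorem stmt8 {X Y : Type*} [DecidableEq X] [DecidableEq Y] [Fintype Y]
    (ℋ : Set (X → Y)) (V : Finset X) (hV : V.Nonempty)
    (hshatter : NatShatters ℋ V)
    (ε : ℝ) (hε0 : 0 < ε) (hε : ε < 1 / 2) (m : ℕ)
    (ℋ' : Finset (X → Y)) (hsub : ↑ℋ' ⊆ ℋ) (hcard : ℋ'.card ≤ m)
    (hcover : ∀ F ∈ ℋ, ∃ H ∈ ℋ',
      ((V.filter (fun v => F v ≠ H v)).card : ℝ) / V.card ≤ ε) :
    (V.card : ℝ) ≤ Real.logb 2 m / (1 - binEnt ε) :=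
  stmt8_general ℋ V hshatter ε hε0 hε m ℋ' hcard hcover
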